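/- Let S and A be measurable spaces, δ a real discount factor with 0 < δ < 1, K a Markov kernel from S × A to S, r : S × A → ℝ a bounded measurable reward, and π : S → A a measurable stationary policy with value V_π. Let σ = (σ_n)_{n∈ℕ} be any history-dependent deterministic policy, where σ_n maps a history (s_0, …, s_n) measurably to an action, with value V_σ(s) = ∫ (∑_{t=0}^∞ δ^t·(1 − δ)·r(s_t, σ_t(s_0,…,s_t))) ∂P^σ_s. Then the performance-difference identity holds: V_σ(s) − V_π(s) = ∫ (∑_{t=0}^∞ δ^t·[ (1 − δ)·r(s_t, a_t) + δ·∫ V_π(s′) ∂K(s_t, a_t) − V_π(s_t) ]) ∂P^σ_s, where a_t = σ_t(s_0,…,s_t). -/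

import Mathlib

/-!
Along a trajectory of `σ`, the expected value of `∫ V ∂K(sₜ, aₜ)` is the expected value of
`V(sₜ₊₁)`; this tower property is proved by induction on `t`, peeling off the first step of the
trajectory measure. Hence the discounted advantage sum has expectation
`𝔼 ∑ δᵗ (1 - δ) r(sₜ, aₜ) + ∑ (δᵗ⁺¹ 𝔼 V(sₜ₊₁) - δᵗ 𝔼 V(sₜ))`, and the second sum telescopes
to `-V(s₀) = -V(s)`. Boundedness and the geometric weights justify exchanging `𝔼` and `∑`.
-/

open MeasureTheory ProbabilityTheory

/-- Prepending an initial state to a trajectory. -/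
def prepend {S : Type*} (s : S) (ω : ℕ → S) : ℕ → S
  | 0 => s
  | n + 1 => ω n

/-- The continuation of a history-dependent policy `σ` after an initial state `s`:
at time `n` with history `h`, it plays what `σ` plays at time `n + 1` with history `s :: h`. -/
def shiftPol {S A : Type*} (σ : (n : ℕ) → (Fin (n + 1) → S) → A) (s : S) :
    (n : ℕ) → (Fin (n + 1) → S) → A :=
  fun n h => σ (n + 1) (Fin.cases s h)

theorem MeasureTheory.Measure.integral_bind_of_bounded {α β : Type*} [MeasurableSpace α]
    [MeasurableSpace β] {μ : Measure α} [IsFiniteMeasure μ] {κ : α → Measure β}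
    (hκ : Measurable κ) (hκ_prob : ∀ a, IsProbabilityMeasure (κ a)) {f : β → ℝ}
    (hf : Measurable f) (hf_bdd : ∃ C, ∀ b, |f b| ≤ C) :
    ∫ b, f b ∂(μ.bind κ) = ∫ a, ∫ b, f b ∂(κ a) ∂μ := by
  let η : Kernel α β := ⟨κ, hκ⟩
  have : IsMarkovKernel η := ⟨hκ_prob⟩
  obtain ⟨C, hC⟩ := hf_bdd
  have hf_int : Integrable f (η ∘ₘ μ) := .of_bound hf.aestronglyMeasurable C (.of_forall hC)
  change ∫ b, f b ∂(η ∘ₘ μ) = _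
  rw [Measure.comp_eq_comp_const_apply] at hf_int ⊢
  rw [Kernel.integral_comp hf_int]
  simp [η]

theorem abs_integral_le_of_abs_le {α : Type*} [MeasurableSpace α] {μ : Measure α}
    [IsProbabilityMeasure μ] {f : α → ℝ} {C : ℝ} (hC : ∀ x, |f x| ≤ C) :
    |∫ x, f x ∂μ| ≤ C := by
  simpa using norm_integral_le_of_norm_le_const (μ := μ)
    (.of_forall fun x => (Real.norm_eq_abs _).trans_le (hC x))

theorem summable_geometric_mul_of_abs_le {δ : ℝ} (hδ0 : 0 ≤ δ) (hδ1 : δ < 1) {a : ℕ → ℝ}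
    {M : ℝ} (ha : ∀ n, |a n| ≤ M) : Summable fun n => δ ^ n * a n := by
  refine .of_norm_bounded ((summable_geometric_of_lt_one hδ0 hδ1).mul_right M) fun n => ?_
  rw [norm_mul, norm_pow, Real.norm_of_nonneg hδ0, Real.norm_eq_abs]
  exact mul_le_mul_of_nonneg_left (ha n) (pow_nonneg hδ0 n)

theorem integral_tsum_geometric {α : Type*} [MeasurableSpace α] {μ : Measure α}
    [IsFiniteMeasure μ] {δ : ℝ} (hδ0 : 0 ≤ δ) (hδ1 : δ < 1) {G : ℕ → α → ℝ}
    (hG : ∀ n, AEStronglyMeasurable (G n) μ) {M : ℝ} (hGM : ∀ n x, |G n x| ≤ M) :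
    ∫ x, ∑' n, δ ^ n * G n x ∂μ = ∑' n, δ ^ n * ∫ x, G n x ∂μ := by
  have hG_int n : Integrable (G n) μ := .of_bound (hG n) M (.of_forall (hGM n))
  simp_rw [← integral_const_mul]
  refine (integral_tsum_of_summable_integral_norm (fun n => (hG_int n).const_mul _) ?_).symm
  simp_rw [norm_mul, norm_pow, Real.norm_of_nonneg hδ0, integral_const_mul]
  refine summable_geometric_mul_of_abs_le hδ0 hδ1 (M := M * μ.real Set.univ) fun n => ?_
  simpa using norm_integral_le_of_norm_le_const (μ := μ) (.of_forall fun x =>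
    (norm_norm (G n x)).trans_le (hGM n x))

theorem Summable.tsum_succ_sub_eq_neg {G : Type*} [AddCommGroup G] [TopologicalSpace G]
    [IsTopologicalAddGroup G] [T2Space G] {u : ℕ → G} (hu : Summable u) :
    ∑' n, (u (n + 1) - u n) = -u 0 := by
  rw [((summable_nat_add_iff 1).mpr hu).tsum_sub hu, hu.tsum_eq_zero_add]
  abel

theorem tsum_geometric_mul_telescope {δ : ℝ} (hδ0 : 0 ≤ δ) (hδ1 : δ < 1) {a v : ℕ → ℝ}
    {Ca Cv : ℝ} (ha : ∀ t, |a t| ≤ Ca) (hv : ∀ t, |v t| ≤ Cv) :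
    ∑' t, δ ^ t * (a t + δ * v (t + 1) - v t) = ∑' t, δ ^ t * a t - v 0 := by
  have hv_sum := summable_geometric_mul_of_abs_le hδ0 hδ1 hv
  calc ∑' t, δ ^ t * (a t + δ * v (t + 1) - v t)
      = ∑' t, (δ ^ t * a t + (δ ^ (t + 1) * v (t + 1) - δ ^ t * v t)) := by
        congr with t
        ring
    _ = ∑' t, δ ^ t * a t - v 0 := by
        rw [(summable_geometric_mul_of_abs_le hδ0 hδ1 ha).tsum_add
            (((summable_nat_add_iff 1).mpr hv_sum).sub hv_sum),
          hv_sum.tsum_succ_sub_eq_neg, pow_zero, one_mul, sub_eq_add_neg]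

theorem prepend_history {S : Type*} (s : S) (ω : ℕ → S) (n : ℕ) :
    (fun i : Fin (n + 2) => prepend s ω i) = Fin.cases s fun i : Fin (n + 1) => ω i := by
  funext i
  induction i using Fin.cases with
  | zero => rfl
  | succ j => rfl

section

variable {S A : Type*} [MeasurableSpace S] [MeasurableSpace A]

theorem measurable_prepend (s : S) : Measurable (prepend s) :=
  measurable_pi_lambda _ fun n => by
    cases n with
    | zero => exact measurable_const
    | succ m => exact measurable_pi_apply m

theorem measurable_shiftPol {σ : (n : ℕ) → (Fin (n + 1) → S) → A}
    (hσ : ∀ n, Measurable (σ n)) (s : S) (n : ℕ) : Measurable (shiftPol σ s n) := by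
  refine (hσ (n + 1)).comp (measurable_pi_lambda _ fun i => ?_)
  induction i using Fin.cases with
  | zero => exact measurable_const
  | succ j => exact measurable_pi_apply j

theorem measurable_state_action {σ : (n : ℕ) → (Fin (n + 1) → S) → A}
    (hσ : ∀ n, Measurable (σ n)) (t : ℕ) :
    Measurable fun ω : ℕ → S => (ω t, σ t fun i => ω i) := by
  have := hσ t
  fun_prop

noncomputable def advantage (δ : ℝ) (K : Kernel (S × A) S) (r : S × A → ℝ) (V : S → ℝ)
    (p : S × A) : ℝ :=
  (1 - δ) * r p + δ * ∫ s', V s' ∂(K p) - V p.1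

theorem measurable_advantage (δ : ℝ) (K : Kernel (S × A) S) {r : S × A → ℝ} (hr : Measurable r)
    {V : S → ℝ} (hV : Measurable V) : Measurable (advantage δ K r V) :=
  ((hr.const_mul _).add (hV.stronglyMeasurable.integral_kernel.measurable.const_mul _)).sub
    (hV.comp measurable_fst)

theorem abs_advantage_le {δ : ℝ} (hδ0 : 0 ≤ δ) (hδ1 : δ ≤ 1) (K : Kernel (S × A) S)
    [IsMarkovKernel K] {r : S × A → ℝ} {Cr : ℝ} (hr : ∀ p, |r p| ≤ Cr) {V : S → ℝ} {Cv : ℝ}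
    (hV : ∀ s, |V s| ≤ Cv) (p : S × A) :
    |advantage δ K r V p| ≤ (1 - δ) * Cr + δ * Cv + Cv :=
  calc |advantage δ K r V p|
      ≤ |(1 - δ) * r p| + |δ * ∫ s', V s' ∂(K p)| + |V p.1| :=
        (abs_sub _ _).trans (add_le_add_left (abs_add_le _ _) _)
    _ ≤ (1 - δ) * Cr + δ * Cv + Cv := by
        rw [abs_mul, abs_mul, abs_of_nonneg (sub_nonneg.mpr hδ1), abs_of_nonneg hδ0]
        gcongr
        exacts [hr p, abs_integral_le_of_abs_le hV, hV _]

/-- The Ionescu–Tulcea trajectory measures of the chain controlled by `K`, characterised by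
their one-step disintegration. -/
structure IsTrajectoryMeasure (K : Kernel (S × A) S)
    (P : ((n : ℕ) → (Fin (n + 1) → S) → A) → S → Measure (ℕ → S)) : Prop where
  isProbabilityMeasure : ∀ σ s, IsProbabilityMeasure (P σ s)
  measurable : ∀ σ : (n : ℕ) → (Fin (n + 1) → S) → A, (∀ n, Measurable (σ n)) →
    Measurable (P σ)
  eq_bind : ∀ σ : (n : ℕ) → (Fin (n + 1) → S) → A, (∀ n, Measurable (σ n)) → ∀ s,
    P σ s = (K (s, σ 0 fun _ => s)).bind fun s₁ => (P (shiftPol σ s) s₁).map (prepend s)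

namespace IsTrajectoryMeasure

variable {K : Kernel (S × A) S} [IsMarkovKernel K]
  {P : ((n : ℕ) → (Fin (n + 1) → S) → A) → S → Measure (ℕ → S)}

theorem integral_eq_integral_prepend (hP : IsTrajectoryMeasure K P)
    {σ : (n : ℕ) → (Fin (n + 1) → S) → A} (hσ : ∀ n, Measurable (σ n)) (s : S)
    {F : (ℕ → S) → ℝ} (hF : Measurable F) (hF_bdd : ∃ C, ∀ ω, |F ω| ≤ C) :
    ∫ ω, F ω ∂(P σ s)
      = ∫ s₁, ∫ ω, F (prepend s ω) ∂(P (shiftPol σ s) s₁) ∂(K (s, σ 0 fun _ => s)) := by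
  have := hP.isProbabilityMeasure
  rw [hP.eq_bind σ hσ s, Measure.integral_bind_of_bounded
    (κ := fun s₁ => (P (shiftPol σ s) s₁).map (prepend s))
    ((Measure.measurable_map _ (measurable_prepend s)).comp
      (hP.measurable _ (measurable_shiftPol hσ s)))
    (fun _ => Measure.isProbabilityMeasure_map (measurable_prepend s).aemeasurable) hF hF_bdd]
  congr with s₁
  exact integral_map (measurable_prepend s).aemeasurable hF.aestronglyMeasurable

theorem integral_comp_eval_zero (hP : IsTrajectoryMeasure K P)
    {σ : (n : ℕ) → (Fin (n + 1) → S) → A} (hσ : ∀ n, Measurable (σ n)) (s : S)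
    {f : S → ℝ} (hf : Measurable f) (hf_bdd : ∃ C, ∀ s, |f s| ≤ C) :
    ∫ ω, f (ω 0) ∂(P σ s) = f s := by
  have := hP.isProbabilityMeasure
  obtain ⟨C, hC⟩ := hf_bdd
  rw [hP.integral_eq_integral_prepend (F := fun ω => f (ω 0)) hσ s
    (hf.comp (measurable_pi_apply 0)) ⟨C, fun ω => hC _⟩]
  simp [prepend]

theorem integral_integral_kernel_eq (hP : IsTrajectoryMeasure K P)
    {f : S → ℝ} (hf : Measurable f) (hf_bdd : ∃ C, ∀ s, |f s| ≤ C) (t : ℕ)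
    {σ : (n : ℕ) → (Fin (n + 1) → S) → A} (hσ : ∀ n, Measurable (σ n)) (s : S) :
    ∫ ω, ∫ s', f s' ∂(K (ω t, σ t fun i => ω i)) ∂(P σ s) = ∫ ω, f (ω (t + 1)) ∂(P σ s) := by
  have := hP.isProbabilityMeasure
  obtain ⟨C, hC⟩ := hf_bdd
  have unfold_lhs (n : ℕ) {σ : (n : ℕ) → (Fin (n + 1) → S) → A} (hσ : ∀ n, Measurable (σ n))
      (s : S) :=
    hP.integral_eq_integral_prepend (F := fun ω => ∫ s', f s' ∂(K (ω n, σ n fun i => ω i)))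
      hσ s (hf.stronglyMeasurable.integral_kernel.measurable.comp
        (measurable_state_action hσ n)) ⟨C, fun ω => abs_integral_le_of_abs_le hC⟩
  have unfold_rhs (n : ℕ) {σ : (n : ℕ) → (Fin (n + 1) → S) → A} (hσ : ∀ n, Measurable (σ n))
      (s : S) :=
    hP.integral_eq_integral_prepend (F := fun ω => f (ω (n + 1))) hσ s (by fun_prop)
      ⟨C, fun ω => hC _⟩
  induction t generalizing σ s with
  | zero =>
    have h_history (ω : ℕ → S) : (fun i : Fin 1 => prepend s ω i) = fun _ => s := by
      funext i
      rw [Fin.fin_one_eq_zero i]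
      rfl
    rw [unfold_lhs 0 hσ s, unfold_rhs 0 hσ s]
    simp only [h_history]
    simp only [prepend, integral_const, probReal_univ, smul_eq_mul, one_mul]
    simp_rw [hP.integral_comp_eval_zero (measurable_shiftPol hσ s) _ hf ⟨C, hC⟩]
  | succ t ih =>
    rw [unfold_lhs (t + 1) hσ s, unfold_rhs (t + 1) hσ s]
    congr with s₁
    simp only [prepend_history]
    exact ih (measurable_shiftPol hσ s) s₁

theorem integral_advantage (hP : IsTrajectoryMeasure K P) (δ : ℝ)
    {r : S × A → ℝ} (hr : Measurable r) (hr_bdd : ∃ C, ∀ p, |r p| ≤ C)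
    {V : S → ℝ} (hV : Measurable V) (hV_bdd : ∃ C, ∀ s, |V s| ≤ C)
    {σ : (n : ℕ) → (Fin (n + 1) → S) → A} (hσ : ∀ n, Measurable (σ n)) (s : S) (t : ℕ) :
    ∫ ω, advantage δ K r V (ω t, σ t fun i => ω i) ∂(P σ s)
      = ∫ ω, (1 - δ) * r (ω t, σ t fun i => ω i) ∂(P σ s)
        + δ * ∫ ω, V (ω (t + 1)) ∂(P σ s) - ∫ ω, V (ω t) ∂(P σ s) := by
  have := hP.isProbabilityMeasure
  obtain ⟨Cr, hCr⟩ := hr_bdd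
  obtain ⟨Cv, hCv⟩ := hV_bdd
  have hx := measurable_state_action hσ t
  have hr_int : Integrable (fun ω : ℕ → S => r (ω t, σ t fun i => ω i)) (P σ s) :=
    .of_bound (hr.comp hx).aestronglyMeasurable Cr (.of_forall fun _ => hCr _)
  have hW_int :
      Integrable (fun ω : ℕ → S => ∫ s', V s' ∂(K (ω t, σ t fun i => ω i))) (P σ s) :=
    .of_bound (hV.stronglyMeasurable.integral_kernel.measurable.comp hx).aestronglyMeasurable Cv
      (.of_forall fun _ => abs_integral_le_of_abs_le hCv)
  have hV_int : Integrable (fun ω : ℕ → S => V (ω t)) (P σ s) :=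
    .of_bound (hV.comp (measurable_pi_apply t)).aestronglyMeasurable Cv (.of_forall fun _ => hCv _)
  simp only [advantage]
  rw [integral_sub ((hr_int.const_mul _).fun_add (hW_int.const_mul _)) hV_int,
    integral_add (hr_int.const_mul _) (hW_int.const_mul _), integral_const_mul δ,
    hP.integral_integral_kernel_eq hV ⟨Cv, hCv⟩ t hσ s]

end IsTrajectoryMeasure

end

theorem performance_difference_identity_general
    {S A : Type*} [MeasurableSpace S] [MeasurableSpace A]
    (δ : ℝ) (hδ0 : 0 < δ) (hδ1 : δ < 1)
    (K : Kernel (S × A) S) [IsMarkovKernel K]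
    (r : S × A → ℝ) (hr_meas : Measurable r) (hr_bd : ∃ C, ∀ p, |r p| ≤ C)
    (Vπ : S → ℝ) (hV_meas : Measurable Vπ) (hV_bd : ∃ C, ∀ s, |Vπ s| ≤ C)
    (Pσ : ((n : ℕ) → (Fin (n + 1) → S) → A) → S → Measure (ℕ → S))
    (hP_prob : ∀ σ s, IsProbabilityMeasure (Pσ σ s))
    (hP_meas : ∀ σ : (n : ℕ) → (Fin (n + 1) → S) → A,
      (∀ n, Measurable (σ n)) → Measurable (Pσ σ))
    (hP_rec : ∀ σ : (n : ℕ) → (Fin (n + 1) → S) → A, (∀ n, Measurable (σ n)) → ∀ s,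
      Pσ σ s = (K (s, σ 0 fun _ => s)).bind fun s₁ =>
        (Pσ (shiftPol σ s) s₁).map (prepend s))
    (σ : (n : ℕ) → (Fin (n + 1) → S) → A) (hσ_meas : ∀ n, Measurable (σ n)) (s : S) :
    (∫ ω, (∑' t : ℕ, δ ^ t * (1 - δ) * r (ω t, σ t fun i => ω i)) ∂(Pσ σ s)) - Vπ s
      = ∫ ω, (∑' t : ℕ, δ ^ t *
          ((1 - δ) * r (ω t, σ t fun i => ω i)
            + δ * (∫ s', Vπ s' ∂(K (ω t, σ t fun i => ω i))) - Vπ (ω t))) ∂(Pσ σ s) := by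
  have hP : IsTrajectoryMeasure K Pσ := ⟨hP_prob, hP_meas, hP_rec⟩
  have := hP_prob σ s
  obtain ⟨Cr, hCr⟩ := hr_bd
  obtain ⟨Cv, hCv⟩ := hV_bd
  have hx := measurable_state_action hσ_meas
  have hr_bd' p : |(1 - δ) * r p| ≤ (1 - δ) * Cr := by
    rw [abs_mul, abs_of_pos (sub_pos.mpr hδ1)]
    exact mul_le_mul_of_nonneg_left (hCr p) (sub_pos.mpr hδ1).le
  calc (∫ ω, (∑' t : ℕ, δ ^ t * (1 - δ) * r (ω t, σ t fun i => ω i)) ∂(Pσ σ s)) - Vπ s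
      = ∑' t, δ ^ t * (∫ ω, (1 - δ) * r (ω t, σ t fun i => ω i) ∂(Pσ σ s)) - Vπ s := by
        simp_rw [mul_assoc]
        rw [integral_tsum_geometric (G := fun t (ω : ℕ → S) => (1 - δ) * r (ω t, σ t fun i => ω i))
          hδ0.le hδ1 (fun t => ((hr_meas.comp (hx t)).const_mul _).aestronglyMeasurable)
          (fun _ _ => hr_bd' _)]
    _ = ∑' t, δ ^ t * (∫ ω, (1 - δ) * r (ω t, σ t fun i => ω i) ∂(Pσ σ s)
          + δ * ∫ ω, Vπ (ω (t + 1)) ∂(Pσ σ s) - ∫ ω, Vπ (ω t) ∂(Pσ σ s)) := by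
        rw [tsum_geometric_mul_telescope (v := fun t => ∫ ω, Vπ (ω t) ∂(Pσ σ s)) hδ0.le hδ1
            (fun _ => abs_integral_le_of_abs_le fun _ => hr_bd' _)
            (fun _ => abs_integral_le_of_abs_le fun _ => hCv _),
          hP.integral_comp_eval_zero hσ_meas s hV_meas ⟨Cv, hCv⟩]
    _ = ∑' t, δ ^ t * ∫ ω, advantage δ K r Vπ (ω t, σ t fun i => ω i) ∂(Pσ σ s) := by
        simp_rw [hP.integral_advantage δ hr_meas ⟨Cr, hCr⟩ hV_meas ⟨Cv, hCv⟩ hσ_meas s]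
    _ = _ := (integral_tsum_geometric hδ0.le hδ1
          (fun t => ((measurable_advantage δ K hr_meas hV_meas).comp (hx t)).aestronglyMeasurable)
          (fun _ _ => abs_advantage_le hδ0.le hδ1.le K hCr hCv _)).symm

/-- Performance-difference identity: for a stationary policy `π` with value `Vπ` (the unique
bounded measurable solution of its Bellman recursion) and any history-dependent deterministic
policy `σ` with Ionescu–Tulcea trajectory measures `Pσ σ s` (characterized by the one-step
disintegration through the shifted policy), the difference between the value of `σ` and the
value of `π` at `s` equals the expected discounted sum of the one-step advantages of `σ`'s
actions relative to `Vπ` along trajectories of `σ`. -/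
theorem performance_difference_identity
    {S A : Type*} [MeasurableSpace S] [MeasurableSpace A]
    (δ : ℝ) (hδ0 : 0 < δ) (hδ1 : δ < 1)
    (K : Kernel (S × A) S) [IsMarkovKernel K]
    (r : S × A → ℝ) (hr_meas : Measurable r) (hr_bd : ∃ C, ∀ p, |r p| ≤ C)
    (π : S → A) (hπ_meas : Measurable π)
    (Vπ : S → ℝ) (hV_meas : Measurable Vπ) (hV_bd : ∃ C, ∀ s, |Vπ s| ≤ C)
    (hV_bellman : ∀ s, Vπ s = (1 - δ) * r (s, π s) + δ * ∫ s', Vπ s' ∂(K (s, π s)))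
    (Pσ : ((n : ℕ) → (Fin (n + 1) → S) → A) → S → Measure (ℕ → S))
    (hP_prob : ∀ σ s, IsProbabilityMeasure (Pσ σ s))
    (hP_meas : ∀ σ : (n : ℕ) → (Fin (n + 1) → S) → A,
      (∀ n, Measurable (σ n)) → Measurable (Pσ σ))
    (hP_rec : ∀ σ : (n : ℕ) → (Fin (n + 1) → S) → A, (∀ n, Measurable (σ n)) → ∀ s,
      Pσ σ s = (K (s, σ 0 fun _ => s)).bind fun s₁ =>
        (Pσ (shiftPol σ s) s₁).map (prepend s))
    (σ : (n : ℕ) → (Fin (n + 1) → S) → A) (hσ_meas : ∀ n, Measurable (σ n)) (s : S) :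
    (∫ ω, (∑' t : ℕ, δ ^ t * (1 - δ) * r (ω t, σ t fun i => ω i)) ∂(Pσ σ s)) - Vπ s
      = ∫ ω, (∑' t : ℕ, δ ^ t *
          ((1 - δ) * r (ω t, σ t fun i => ω i)
            + δ * (∫ s', Vπ s' ∂(K (ω t, σ t fun i => ω i))) - Vπ (ω t))) ∂(Pσ σ s) :=
  performance_difference_identity_general δ hδ0 hδ1 K r hr_meas hr_bd Vπ hV_meas hV_bd Pσ hP_prob
    hP_meas hP_rec σ hσ_meas s
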